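/- Suppose m = n, and write the interaction decompositions as u = u_∅ + ∑_{i=1}^n u_{{i}} + ũ and v = v_∅ + ∑_{i=1}^n v_{{i}} + ṽ, where ũ := ∑_{|I| ≥ 2} u_I and ṽ := ∑_{|J| ≥ 2} v_J collect all components of order at least two. The following are equivalent: (i) there exist functions h : X → ℝ and f_i : X_i × Y_i → ℝ (i = 1,…,n) such that P(y|x) = h(x) · ∏_{i=1}^n f_i(x_i, y_i) for all x ∈ X, y ∈ Y; (ii) ⟨u(x), ṽ(y)⟩ = 0 and ⟨ũ(x), v(y) − v_∅⟩ = 0 for all x ∈ X, y ∈ Y, and ⟨u_{{i}}(x), v_{{j}}(y)⟩ = 0 for all x ∈ X, y ∈ Y whenever i ≠ j. -/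

import Mathlib

open Finset
open scoped RealInnerProductSpace

/-!
Taking logarithms, the factorization says exactly that the score `⟪u x, v y⟫` has the form
`a x + ∑ i, g i (x i) (y i)`. Each `Q_I` is linear, depends only on the coordinates in `I`, kills
every function that is invariant in some coordinate of `I`, and the `Q_I` sum to the identity.
Hence on such a score `Q_J` in `y` (`|J| ≥ 2`) leaves nothing, `Q_I` in `x` (`|I| ≥ 2`) leaves a
function of `x` alone, and `Q_{i}` in `x` after `Q_{j}` in `y` leaves nothing when `i ≠ j`.
Conversely, expanding `u` and `v` into their components, the orthogonality relations reduce
`⟪u x, v y⟫` to `⟪u x, v_∅⟫ + ∑ j, (⟪u_∅, v_{j} y⟫ + ⟪u_{j} x, v_{j} y⟫)`, and `u_{j} x`, `v_{j} y`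
depend on `x j`, `y j` only.
-/

/-- Averaging operator π_J. -/
noncomputable def piAvg {ι : Type*} [Fintype ι] [DecidableEq ι] {Z : ι → Type*}
    [∀ i, Fintype (Z i)] [∀ i, DecidableEq (Z i)] {V : Type*} [AddCommGroup V] [Module ℝ V]
    (J : Finset ι) (w : (∀ i, Z i) → V) : (∀ i, Z i) → V :=
  fun z => (∏ i ∈ Jᶜ, (Fintype.card (Z i) : ℝ))⁻¹ •
    ∑ z' ∈ Finset.univ.filter (fun z' : ∀ i, Z i => ∀ i ∈ J, z' i = z i), w z'

/-- Interaction projection Q_I. -/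
noncomputable def Qop {ι : Type*} [Fintype ι] [DecidableEq ι] {Z : ι → Type*}
    [∀ i, Fintype (Z i)] [∀ i, DecidableEq (Z i)] {V : Type*} [AddCommGroup V] [Module ℝ V]
    (I : Finset ι) (w : (∀ i, Z i) → V) : (∀ i, Z i) → V :=
  ∑ J ∈ I.powerset, ((-1 : ℝ) ^ (I \ J).card) • piAvg J w

lemma sum_eq_empty_add_sum_singleton_add_sum_two_le_card {ι M : Type*} [Fintype ι]
    [DecidableEq ι] [AddCommMonoid M] (F : Finset ι → M) :
    ∑ I, F I = F ∅ + ∑ i, F {i} + ∑ I ∈ univ.filter (fun I : Finset ι => 2 ≤ #I), F I := by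
  have hsmall : univ.filter (fun I : Finset ι => ¬ 2 ≤ #I) =
      insert ∅ (univ.map ⟨singleton, singleton_injective⟩) := by
    ext I
    simp [Nat.le_one_iff_eq_zero_or_eq_one, card_eq_one, eq_comm]
  rw [← sum_filter_not_add_sum_filter univ (fun I : Finset ι => 2 ≤ #I), hsmall,
    sum_insert (by simp), sum_map]
  rfl

section Alternating

variable {ι M : Type*} [DecidableEq ι] [AddCommGroup M] [Module ℝ M]

lemma sum_powerset_insert_neg_one_pow_card_sdiff_smul {s : Finset ι} {k : ι} (hk : k ∉ s)
    (F : Finset ι → M) :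
    ∑ J ∈ (insert k s).powerset, (-1 : ℝ) ^ #(insert k s \ J) • F J =
      ∑ J ∈ s.powerset, (-1 : ℝ) ^ #(s \ J) • (F (insert k J) - F J) := by
  rw [sum_powerset_insert hk, ← sum_add_distrib]
  refine sum_congr rfl fun J hJ => ?_
  have hkJ : k ∉ J := fun h => hk (mem_powerset.mp hJ h)
  rw [insert_sdiff_of_notMem _ hkJ, card_insert_of_notMem fun h => hk (mem_sdiff.mp h).1,
    insert_sdiff_insert, sdiff_insert_of_notMem hk, pow_succ, mul_neg_one, neg_smul, smul_sub]
  abel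

lemma sum_powerset_neg_one_pow_card_sdiff_smul_eq_zero {I : Finset ι} {k : ι} (hk : k ∈ I)
    {F : Finset ι → M} (hF : ∀ J, F (insert k J) = F J) :
    ∑ J ∈ I.powerset, (-1 : ℝ) ^ #(I \ J) • F J = 0 := by
  rw [← insert_erase hk, sum_powerset_insert_neg_one_pow_card_sdiff_smul (notMem_erase k I)]
  simp [hF]

lemma sum_powerset_sum_powerset_neg_one_pow_card_sdiff_smul (F : Finset ι → M) (S : Finset ι) :
    ∑ I ∈ S.powerset, ∑ J ∈ I.powerset, (-1 : ℝ) ^ #(I \ J) • F J = F S := by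
  induction S using Finset.induction_on generalizing F with
  | empty => simp
  | insert k S hk ih =>
    rw [sum_powerset_insert hk, ih, sum_congr rfl fun I hI =>
      sum_powerset_insert_neg_one_pow_card_sdiff_smul (fun h => hk (mem_powerset.mp hI h)) F,
      ih fun J => F (insert k J) - F J]
    abel

end Alternating

section Averaging

variable {ι : Type*} [Fintype ι] [DecidableEq ι] {Z : ι → Type*}
  [∀ i, Fintype (Z i)] [∀ i, DecidableEq (Z i)] {V : Type*} [AddCommGroup V] [Module ℝ V]

/-- `ũ` in the paper's notation. -/
noncomputable def highOrderPart (w : (∀ i, Z i) → V) : (∀ i, Z i) → V :=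
  ∑ I ∈ univ.filter (fun I : Finset ι => 2 ≤ #I), Qop I w

lemma card_filter_piecewise_eq {J : Finset ι} {z z'' : ∀ i, Z i} (h : ∀ i ∈ J, z'' i = z i) :
    #{z' | J.piecewise z z' = z''} = ∏ i ∈ J, Fintype.card (Z i) := by
  have hpi : ({z' | J.piecewise z z' = z''} : Finset (∀ i, Z i)) =
      Fintype.piFinset fun i => if i ∈ J then univ else {z'' i} := by
    ext z'
    simp only [mem_filter, mem_univ, true_and, Fintype.mem_piFinset, funext_iff]
    refine forall_congr' fun i => ?_
    by_cases hi : i ∈ J <;> simp [hi, h, eq_comm]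
  rw [hpi, Fintype.card_piFinset]
  simp [apply_ite, prod_ite_mem]

variable [∀ i, Nonempty (Z i)]

lemma piAvg_eq_smul_sum_piecewise (J : Finset ι) (w : (∀ i, Z i) → V) (z : ∀ i, Z i) :
    piAvg J w z = (∏ i, (Fintype.card (Z i) : ℝ))⁻¹ • ∑ z', w (J.piecewise z z') := by
  -- `z' ↦ J.piecewise z z'` hits each point of the slice through `z` exactly `∏ i ∈ J, |Z i|` times.
  have hfiber : ∑ z', w (J.piecewise z z') =
      (∏ i ∈ J, Fintype.card (Z i)) • ∑ z' ∈ univ.filter (fun z' => ∀ i ∈ J, z' i = z i), w z' := by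
    rw [← sum_fiberwise_of_maps_to (t := univ.filter (fun z' => ∀ i ∈ J, z' i = z i))
      (g := fun z' => J.piecewise z z') fun z' _ => by simp +contextual [piecewise_eq_of_mem],
      smul_sum]
    refine sum_congr rfl fun z'' hz'' => ?_
    rw [sum_congr rfl fun z' hz' => congrArg w (mem_filter.mp hz').2, sum_const,
      card_filter_piecewise_eq (mem_filter.mp hz'').2]
  rw [hfiber, ← Nat.cast_smul_eq_nsmul ℝ, smul_smul, ← prod_mul_prod_compl J, Nat.cast_prod]
  unfold piAvg
  congr 1
  have : (∏ i ∈ J, (Fintype.card (Z i) : ℝ)) ≠ 0 := by positivity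
  field_simp

lemma piAvg_const (J : Finset ι) (c : V) (z : ∀ i, Z i) : piAvg J (fun _ => c) z = c := by
  rw [piAvg_eq_smul_sum_piecewise, sum_const, card_univ, Fintype.card_pi,
    ← Nat.cast_smul_eq_nsmul ℝ, smul_smul, Nat.cast_prod, inv_mul_cancel₀ (by positivity),
    one_smul]

lemma piAvg_univ (w : (∀ i, Z i) → V) (z : ∀ i, Z i) : piAvg univ w z = w z := by
  simpa only [piAvg_eq_smul_sum_piecewise, piecewise_univ] using piAvg_const univ (w z) z

lemma piAvg_congr {J : Finset ι} (w : (∀ i, Z i) → V) {z z' : ∀ i, Z i}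
    (h : ∀ i ∈ J, z i = z' i) : piAvg J w z = piAvg J w z' := by
  simp only [piAvg_eq_smul_sum_piecewise, piecewise_congr J h fun _ _ => rfl]

lemma piAvg_insert_of_update_eq {k : ι} {w : (∀ i, Z i) → V}
    (hw : ∀ z a, w (Function.update z k a) = w z) (J : Finset ι) (z : ∀ i, Z i) :
    piAvg (insert k J) w z = piAvg J w z := by
  simp only [piAvg_eq_smul_sum_piecewise, piecewise_insert, hw]

omit [∀ i, Nonempty (Z i)] in
lemma Qop_apply (I : Finset ι) (w : (∀ i, Z i) → V) (z : ∀ i, Z i) :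
    Qop I w z = ∑ J ∈ I.powerset, (-1 : ℝ) ^ #(I \ J) • piAvg J w z := by
  simp [Qop]

lemma sum_Qop (w : (∀ i, Z i) → V) (z : ∀ i, Z i) : ∑ I, Qop I w z = w z := by
  simp only [Qop_apply]
  rw [← powerset_univ, sum_powerset_sum_powerset_neg_one_pow_card_sdiff_smul, piAvg_univ]

lemma Qop_eq_zero_of_update_eq {I : Finset ι} {k : ι} (hk : k ∈ I) {w : (∀ i, Z i) → V}
    (hw : ∀ z a, w (Function.update z k a) = w z) (z : ∀ i, Z i) : Qop I w z = 0 := by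
  rw [Qop_apply]
  exact sum_powerset_neg_one_pow_card_sdiff_smul_eq_zero hk fun J =>
    piAvg_insert_of_update_eq hw J z

lemma Qop_const {I : Finset ι} (hI : I.Nonempty) (c : V) (z : ∀ i, Z i) :
    Qop I (fun _ => c) z = 0 :=
  Qop_eq_zero_of_update_eq hI.choose_spec (fun _ _ => rfl) z

lemma Qop_comp_eval {I : Finset ι} {i k : ι} (hk : k ∈ I) (hki : k ≠ i) (g : Z i → V)
    (z : ∀ i, Z i) : Qop I (fun z => g (z i)) z = 0 :=
  Qop_eq_zero_of_update_eq hk (fun z a => by rw [Function.update_of_ne hki.symm]) z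

lemma Qop_empty_const (c : V) (z : ∀ i, Z i) : Qop ∅ (fun _ => c) z = c := by
  simp [Qop_apply, piAvg_const]

lemma Qop_congr {I : Finset ι} (w : (∀ i, Z i) → V) {z z' : ∀ i, Z i}
    (h : ∀ i ∈ I, z i = z' i) : Qop I w z = Qop I w z' := by
  simp only [Qop_apply]
  exact sum_congr rfl fun J hJ => by
    rw [piAvg_congr w fun i hi => h i (mem_powerset.mp hJ hi)]

omit [∀ i, Nonempty (Z i)] in
lemma Qop_add (I : Finset ι) (w₁ w₂ : (∀ i, Z i) → V) (z : ∀ i, Z i) :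
    Qop I (fun z => w₁ z + w₂ z) z = Qop I w₁ z + Qop I w₂ z := by
  simp [Qop_apply, piAvg, sum_add_distrib, smul_add]

omit [∀ i, Nonempty (Z i)] in
lemma Qop_sum {κ : Type*} (I : Finset ι) (s : Finset κ) (w : κ → (∀ i, Z i) → V)
    (z : ∀ i, Z i) : Qop I (fun z => ∑ k ∈ s, w k z) z = ∑ k ∈ s, Qop I (w k) z := by
  have hzero : Qop I (fun _ => (0 : V)) z = 0 := by simp [Qop_apply, piAvg]
  classical
  induction s using Finset.induction_on with
  | empty => simpa using hzero
  | insert k s hk ih => simp only [sum_insert hk, Qop_add, ih]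

omit [∀ i, Nonempty (Z i)] in
lemma map_Qop {W : Type*} [AddCommGroup W] [Module ℝ W] (L : V →ₗ[ℝ] W) (I : Finset ι)
    (w : (∀ i, Z i) → V) (z : ∀ i, Z i) : L (Qop I w z) = Qop I (fun z => L (w z)) z := by
  simp [Qop_apply, piAvg, map_sum, map_smul]

lemma eq_Qop_empty_add_sum_Qop_singleton_add_highOrderPart (w : (∀ i, Z i) → V)
    (z : ∀ i, Z i) : w z = Qop ∅ w z + ∑ i, Qop {i} w z + highOrderPart w z := by
  rw [highOrderPart, Finset.sum_apply,
    ← sum_eq_empty_add_sum_singleton_add_sum_two_le_card fun I => Qop I w z, sum_Qop]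

end Averaging

section InnerProduct

variable {ι : Type*} [Fintype ι] [DecidableEq ι] {Z : ι → Type*}
  [∀ i, Fintype (Z i)] [∀ i, DecidableEq (Z i)] {V : Type*} [NormedAddCommGroup V]
  [InnerProductSpace ℝ V]

lemma inner_Qop_right (c : V) (I : Finset ι) (w : (∀ i, Z i) → V) (z : ∀ i, Z i) :
    ⟪c, Qop I w z⟫ = Qop I (fun z => ⟪c, w z⟫) z :=
  map_Qop (innerSL ℝ c).toLinearMap I w z

lemma inner_Qop_left (c : V) (I : Finset ι) (w : (∀ i, Z i) → V) (z : ∀ i, Z i) :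
    ⟪Qop I w z, c⟫ = Qop I (fun z => ⟪w z, c⟫) z := by
  simpa only [real_inner_comm c] using inner_Qop_right c I w z

lemma inner_eq_inner_Qop_empty_add_sum_inner_Qop_singleton [∀ i, Nonempty (Z i)] {c : V}
    {w : (∀ i, Z i) → V} {z : ∀ i, Z i} (h : ⟪c, highOrderPart w z⟫ = 0) :
    ⟪c, w z⟫ = ⟪c, Qop ∅ w z⟫ + ∑ j, ⟪c, Qop {j} w z⟫ := by
  conv_lhs => rw [eq_Qop_empty_add_sum_Qop_singleton_add_highOrderPart w z]
  rw [inner_add_right, inner_add_right, inner_sum, h, add_zero]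

end InnerProduct

def IsPairedAdditive {ι : Type*} [Fintype ι] {X Y : ι → Type*}
    (s : (∀ i, X i) → (∀ i, Y i) → ℝ) : Prop :=
  ∃ (a : (∀ i, X i) → ℝ) (g : ∀ i, X i → Y i → ℝ), ∀ x y, s x y = a x + ∑ i, g i (x i) (y i)

lemma exists_factorization_iff_isPairedAdditive {ι : Type*} [Fintype ι] [DecidableEq ι]
    {X Y : ι → Type*} [∀ i, Fintype (Y i)] {s P : (∀ i, X i) → (∀ i, Y i) → ℝ}
    (hP : ∀ x y, P x y = Real.exp (s x y) / ∑ y', Real.exp (s x y')) :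
    (∃ (h : (∀ i, X i) → ℝ) (f : ∀ i, X i → Y i → ℝ),
      ∀ x y, P x y = h x * ∏ i, f i (x i) (y i)) ↔ IsPairedAdditive s := by
  have hZ : ∀ x y, 0 < ∑ y', Real.exp (s x y') := fun x y =>
    sum_pos (fun _ _ => Real.exp_pos _) ⟨y, mem_univ y⟩
  constructor
  · rintro ⟨h, f, hf⟩
    refine ⟨fun x => Real.log (h x) + Real.log (∑ y', Real.exp (s x y')),
      fun i p q => Real.log (f i p q), fun x y => ?_⟩
    have hpos : h x * ∏ i, f i (x i) (y i) ≠ 0 := by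
      rw [← hf, hP]
      exact (div_pos (Real.exp_pos _) (hZ x y)).ne'
    have hlog := congrArg Real.log ((hP x y).symm.trans (hf x y))
    rw [Real.log_div (Real.exp_ne_zero _) (hZ x y).ne', Real.log_exp,
      Real.log_mul (left_ne_zero_of_mul hpos) (right_ne_zero_of_mul hpos),
      Real.log_prod fun i _ => prod_ne_zero_iff.mp (right_ne_zero_of_mul hpos) i (mem_univ i)]
      at hlog
    linarith
  · rintro ⟨a, g, hs⟩
    refine ⟨fun x => Real.exp (a x) / ∑ y', Real.exp (s x y'),
      fun i p q => Real.exp (g i p q), fun x y => ?_⟩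
    rw [hP, hs x y, Real.exp_add, Real.exp_sum]
    ring

section AdditiveScore

variable {ι : Type*} [Fintype ι] [DecidableEq ι] {Z : ι → Type*}
  [∀ i, Fintype (Z i)] [∀ i, Nonempty (Z i)] [∀ i, DecidableEq (Z i)]
  {V : Type*} [AddCommGroup V] [Module ℝ V]

lemma Qop_add_sum_comp_eval {I : Finset ι} (hI : 2 ≤ #I) (a : (∀ i, Z i) → V)
    (g : ∀ i, Z i → V) (z : ∀ i, Z i) :
    Qop I (fun z => a z + ∑ i, g i (z i)) z = Qop I a z := by
  rw [Qop_add, Qop_sum, sum_eq_zero fun i _ => ?_, add_zero]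
  obtain ⟨k, hk, hki⟩ := exists_mem_ne hI i
  exact Qop_comp_eval hk hki (g i) z

lemma Qop_singleton_const_add_sum_comp_eval (j : ι) (c : V) (g : ∀ i, Z i → V)
    (z : ∀ i, Z i) :
    Qop {j} (fun z => c + ∑ i, g i (z i)) z = Qop {j} (fun z => g j (z j)) z := by
  rw [Qop_add, Qop_const (singleton_nonempty j), zero_add, Qop_sum,
    sum_eq_single j (fun i _ hij => Qop_comp_eval (mem_singleton_self j) hij.symm (g i) z)
      (by simp)]

end AdditiveScore

section Orthogonality

variable {ι : Type*} [Fintype ι] [DecidableEq ι]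
  {X : ι → Type*} [∀ i, Fintype (X i)] [∀ i, Nonempty (X i)] [∀ i, DecidableEq (X i)]
  {Y : ι → Type*} [∀ i, Fintype (Y i)] [∀ i, Nonempty (Y i)] [∀ i, DecidableEq (Y i)]
  {V : Type*} [NormedAddCommGroup V] [InnerProductSpace ℝ V]
  {u : (∀ i, X i) → V} {v : (∀ i, Y i) → V}

namespace IsPairedAdditive

variable (hs : IsPairedAdditive fun x y => ⟪u x, v y⟫)
include hs

omit [∀ i, Fintype (X i)] [∀ i, Nonempty (X i)] [∀ i, DecidableEq (X i)] in
lemma inner_highOrderPart_right (x : ∀ i, X i) (y : ∀ i, Y i) :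
    ⟪u x, highOrderPart v y⟫ = 0 := by
  obtain ⟨a, g, hs⟩ := hs
  beta_reduce at hs
  rw [highOrderPart, Finset.sum_apply, inner_sum]
  refine sum_eq_zero fun J hJ => ?_
  have hJ2 := (mem_filter.mp hJ).2
  rw [inner_Qop_right, funext (hs x), Qop_add_sum_comp_eval hJ2 (fun _ => a x),
    Qop_const (card_pos.mp (by omega))]

lemma inner_highOrderPart_left (x : ∀ i, X i) (y : ∀ i, Y i) :
    ⟪highOrderPart u x, v y - Qop ∅ v y⟫ = 0 := by
  obtain ⟨a, g, hs⟩ := hs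
  beta_reduce at hs
  have hconst : ∀ y', ⟪highOrderPart u x, v y'⟫ = highOrderPart a x := fun y' => by
    rw [highOrderPart, highOrderPart, Finset.sum_apply, Finset.sum_apply, sum_inner]
    refine sum_congr rfl fun I hI => ?_
    rw [inner_Qop_left, funext fun x' => hs x' y',
      Qop_add_sum_comp_eval (mem_filter.mp hI).2 a fun i p => g i p (y' i)]
  rw [inner_sub_right, inner_Qop_right, funext hconst, Qop_empty_const, hconst, sub_self]

lemma inner_Qop_singleton_of_ne {i j : ι} (hij : i ≠ j) (x : ∀ i, X i) (y : ∀ i, Y i) :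
    ⟪Qop {i} u x, Qop {j} v y⟫ = 0 := by
  obtain ⟨a, g, hs⟩ := hs
  beta_reduce at hs
  have hx : ∀ x', ⟪u x', Qop {j} v y⟫ = Qop {j} (fun y' => g j (x' j) (y' j)) y := fun x' => by
    rw [inner_Qop_right, funext (hs x'), Qop_singleton_const_add_sum_comp_eval]
  rw [inner_Qop_left, funext hx]
  exact Qop_comp_eval (mem_singleton_self i) hij (fun p => Qop {j} (fun y' => g j p (y' j)) y) x

end IsPairedAdditive

variable (hA : ∀ x y, ⟪u x, highOrderPart v y⟫ = 0)
  (hB : ∀ x y, ⟪highOrderPart u x, v y - Qop ∅ v y⟫ = 0)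
  (hC : ∀ i j, i ≠ j → ∀ x y, ⟪Qop {i} u x, Qop {j} v y⟫ = 0)

include hB hC in
lemma inner_Qop_singleton_right (j : ι) (x : ∀ i, X i) (y : ∀ i, Y i) :
    ⟪u x, Qop {j} v y⟫ = ⟪Qop ∅ u x, Qop {j} v y⟫ + ⟪Qop {j} u x, Qop {j} v y⟫ := by
  have hconst : ∀ y', ⟪highOrderPart u x, v y'⟫ = ⟪highOrderPart u x, Qop ∅ v y⟫ := fun y' => by
    rw [← sub_eq_zero, ← inner_sub_right, Qop_congr v (z' := y') (by simp), hB]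
  have hhigh : ⟪highOrderPart u x, Qop {j} v y⟫ = 0 := by
    rw [inner_Qop_right, funext hconst, Qop_const (singleton_nonempty j)]
  conv_lhs => rw [eq_Qop_empty_add_sum_Qop_singleton_add_highOrderPart u x]
  rw [inner_add_left, inner_add_left, sum_inner, hhigh, add_zero,
    sum_eq_single j (fun i _ hij => hC i j hij x y) (by simp)]

include hA hB hC in
lemma isPairedAdditive_of_orthogonal : IsPairedAdditive fun x y => ⟪u x, v y⟫ := by
  obtain ⟨x₀⟩ : Nonempty (∀ i, X i) := inferInstance
  obtain ⟨y₀⟩ : Nonempty (∀ i, Y i) := inferInstance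
  refine ⟨fun x => ⟪u x, Qop ∅ v y₀⟫, fun j p q =>
    ⟪Qop ∅ u x₀, Qop {j} v (Function.update y₀ j q)⟫ +
      ⟪Qop {j} u (Function.update x₀ j p), Qop {j} v (Function.update y₀ j q)⟫, fun x y => ?_⟩
  beta_reduce
  rw [inner_eq_inner_Qop_empty_add_sum_inner_Qop_singleton (hA x y),
    Qop_congr (I := ∅) v (z' := y₀) (by simp)]
  refine congrArg _ (sum_congr rfl fun j _ => ?_)
  rw [inner_Qop_singleton_right hB hC, Qop_congr (I := ∅) u (z' := x₀) (by simp),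
    Qop_congr (I := {j}) u (z' := Function.update x₀ j (x j)) (by simp),
    Qop_congr (I := {j}) v (z' := Function.update y₀ j (y j)) (by simp)]

end Orthogonality

theorem paired_factorization_iff_orthogonal_general {n : ℕ}
    (X : Fin n → Type*) [∀ i, Fintype (X i)] [∀ i, Nonempty (X i)] [∀ i, DecidableEq (X i)]
    (Y : Fin n → Type*) [∀ j, Fintype (Y j)] [∀ j, Nonempty (Y j)] [∀ j, DecidableEq (Y j)]
    (V : Type*) [NormedAddCommGroup V] [InnerProductSpace ℝ V]
    (u : (∀ i, X i) → V) (v : (∀ j, Y j) → V)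
    (P : (∀ i, X i) → (∀ j, Y j) → ℝ)
    (hP : ∀ x y, P x y =
      Real.exp ⟪u x, v y⟫ / ∑ y' : ∀ j, Y j, Real.exp ⟪u x, v y'⟫) :
    (∃ (h : (∀ i, X i) → ℝ) (f : ∀ i : Fin n, X i → Y i → ℝ),
      ∀ (x : ∀ i, X i) (y : ∀ j, Y j), P x y = h x * ∏ i : Fin n, f i (x i) (y i)) ↔
    ((∀ (x : ∀ i, X i) (y : ∀ j, Y j),
        ⟪u x, (∑ J ∈ Finset.univ.filter (fun J : Finset (Fin n) => 2 ≤ J.card),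
          Qop J v) y⟫ = 0) ∧
      (∀ (x : ∀ i, X i) (y : ∀ j, Y j),
        ⟪(∑ I ∈ Finset.univ.filter (fun I : Finset (Fin n) => 2 ≤ I.card),
          Qop I u) x, v y - Qop (∅ : Finset (Fin n)) v y⟫ = 0) ∧
      (∀ i j : Fin n, i ≠ j → ∀ (x : ∀ i, X i) (y : ∀ j, Y j),
        ⟪Qop ({i} : Finset (Fin n)) u x, Qop ({j} : Finset (Fin n)) v y⟫ = 0)) := by
  rw [exists_factorization_iff_isPairedAdditive hP]
  constructor
  · intro hs
    exact ⟨hs.inner_highOrderPart_right, hs.inner_highOrderPart_left,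
      fun _ _ hij => hs.inner_Qop_singleton_of_ne hij⟩
  · rintro ⟨hA, hB, hC⟩
    exact isPairedAdditive_of_orthogonal hA hB hC

/-- with `m = n`, the factorization `P(y|x) = h(x) · ∏ᵢ fᵢ(xᵢ, yᵢ)` is
equivalent to `⟨u, ṽ⟩ = ⟨ũ, v − v_∅⟩ = 0` and `⟨u_{i}, v_{j}⟩ = 0` for `i ≠ j`, where
`ũ, ṽ` collect the interaction components of order at least two. -/
theorem paired_factorization_iff_orthogonal {n : ℕ}
    (X : Fin n → Type*) [∀ i, Fintype (X i)] [∀ i, Nonempty (X i)] [∀ i, DecidableEq (X i)]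
    (Y : Fin n → Type*) [∀ j, Fintype (Y j)] [∀ j, Nonempty (Y j)] [∀ j, DecidableEq (Y j)]
    (V : Type*) [NormedAddCommGroup V] [InnerProductSpace ℝ V] [FiniteDimensional ℝ V]
    (u : (∀ i, X i) → V) (v : (∀ j, Y j) → V)
    (P : (∀ i, X i) → (∀ j, Y j) → ℝ)
    (hP : ∀ x y, P x y =
      Real.exp ⟪u x, v y⟫ / ∑ y' : ∀ j, Y j, Real.exp ⟪u x, v y'⟫) :
    (∃ (h : (∀ i, X i) → ℝ) (f : ∀ i : Fin n, X i → Y i → ℝ),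
      ∀ (x : ∀ i, X i) (y : ∀ j, Y j), P x y = h x * ∏ i : Fin n, f i (x i) (y i)) ↔
    ((∀ (x : ∀ i, X i) (y : ∀ j, Y j),
        ⟪u x, (∑ J ∈ Finset.univ.filter (fun J : Finset (Fin n) => 2 ≤ J.card),
          Qop J v) y⟫ = 0) ∧
      (∀ (x : ∀ i, X i) (y : ∀ j, Y j),
        ⟪(∑ I ∈ Finset.univ.filter (fun I : Finset (Fin n) => 2 ≤ I.card),
          Qop I u) x, v y - Qop (∅ : Finset (Fin n)) v y⟫ = 0) ∧
      (∀ i j : Fin n, i ≠ j → ∀ (x : ∀ i, X i) (y : ∀ j, Y j),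
        ⟪Qop ({i} : Finset (Fin n)) u x, Qop ({j} : Finset (Fin n)) v y⟫ = 0)) :=
  paired_factorization_iff_orthogonal_general X Y V u v P hP
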